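/- Define λ* ∈ ℝ^{2N} by λ*_{2k} = p₀·e^{−2εk}·e^{ε}/z and λ*_{2k+1} = p₀·e^{−2εk}·e^{−ε}/z for k = 0,…,N−1, where p₀ = (1 − e^{−2ε})/(1 − e^{−2εN}). Then λ* is a probability vector and is a fixed point of the full TSAC iteration: applying the reset step (ζ_{2k} = (λ_{2k}+λ_{2k+1})·e^{ε}/z, ζ_{2k+1} = (λ_{2k}+λ_{2k+1})·e^{−ε}/z) followed by the two-sort permutation (which fixes indices 0 and 2N−1 and swaps 2k−1 ↔ 2k for k = 1,…,N−1) returns λ* unchanged. -/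

import Mathlib

/-!
`λ*` interleaves the geometric vector `p_k = p₀ e^{-2εk}` with the reset state
`r = (e^ε, e^{-ε})/z`. The reset step replaces each pair `(λ_{2k}, λ_{2k+1})` by its total `p_k`
times `r`, which changes nothing. The two-sort permutation only swaps `λ_{2k+1} = p_k e^{-ε}/z`
with `λ_{2k+2} = p_{k+1} e^{ε}/z`, and these agree because `p_{k+1} = e^{-2ε} p_k`.
Normalisation is the geometric sum.
-/

open Real Finset

/-- The two-sort permutation on `{0, …, M-1}`: it fixes `0` and `M-1` and swaps
`2k-1 ↔ 2k` for every `k = 1, …, M/2 - 1`. -/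
def sigmaTS (M : ℕ) : Fin M → Fin M := fun j =>
  if h : (j : ℕ) % 2 = 1 ∧ (j : ℕ) < M - 1 then
    ⟨(j : ℕ) + 1, by have := j.isLt; omega⟩
  else if h' : (j : ℕ) % 2 = 0 ∧ (j : ℕ) ≠ 0 then
    ⟨(j : ℕ) - 1, by have := j.isLt; omega⟩
  else j

theorem Finset.sum_range_two_mul {M : Type*} [AddCommMonoid M] (f : ℕ → M) (m : ℕ) :
    ∑ i ∈ range (2 * m), f i = ∑ k ∈ range m, (f (2 * k) + f (2 * k + 1)) := by
  induction m with
  | zero => simp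
  | succ m ih =>
    rw [show 2 * (m + 1) = 2 * m + 1 + 1 by ring, sum_range_succ, sum_range_succ, ih,
      sum_range_succ, add_assoc]

theorem Fin.eq_of_eq_on_pairs {α : Type*} {m : ℕ} {f g : Fin (2 * m) → α}
    (h₀ : ∀ k : Fin m, f ⟨2 * k, by omega⟩ = g ⟨2 * k, by omega⟩)
    (h₁ : ∀ k : Fin m, f ⟨2 * k + 1, by omega⟩ = g ⟨2 * k + 1, by omega⟩) : f = g := by
  funext ⟨j, hj⟩
  obtain ⟨k, rfl | rfl⟩ := Nat.even_or_odd' j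
  · exact h₀ ⟨k, by omega⟩
  · exact h₁ ⟨k, by omega⟩

theorem apply_sigmaTS_eq {α : Type*} {f : ℕ → α} (hf : ∀ k, f (2 * k + 1) = f (2 * k + 2))
    {M : ℕ} (j : Fin M) : f (sigmaTS M j) = f j := by
  unfold sigmaTS
  split_ifs with hodd heven
  · obtain ⟨k, hk⟩ : ∃ k, (j : ℕ) = 2 * k + 1 := ⟨j / 2, by omega⟩
    simp only [hk]
    exact (hf k).symm
  · obtain ⟨k, hk⟩ : ∃ k, (j : ℕ) = 2 * k + 2 := ⟨(j - 2) / 2, by omega⟩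
    simp only [hk, show 2 * k + 2 - 1 = 2 * k + 1 by omega]
    exact hf k
  · rfl

theorem geom_sum_normalized {K : Type*} [Field K] {x : K} {N : ℕ} (hx : x ≠ 1) (hxN : x ^ N ≠ 1) :
    ∑ k ∈ range N, (1 - x) / (1 - x ^ N) * x ^ k = 1 := by
  rw [← mul_sum, geom_sum_eq hx, div_mul_div_comm,
    div_eq_one_iff_eq (mul_ne_zero (sub_ne_zero.mpr hxN.symm) (sub_ne_zero.mpr hx))]
  ring

section interleave

variable {R : Type*} [CommSemiring R] (p : ℕ → R) (r₀ r₁ : R)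

/-- The diagonal of `diag p ⊗ diag (r₀, r₁)`. -/
def interleave (i : ℕ) : R := p (i / 2) * if i % 2 = 0 then r₀ else r₁

@[simp]
theorem interleave_two_mul (k : ℕ) : interleave p r₀ r₁ (2 * k) = p k * r₀ := by
  simp [interleave]

@[simp]
theorem interleave_two_mul_add_one (k : ℕ) : interleave p r₀ r₁ (2 * k + 1) = p k * r₁ := by
  simp [interleave, Nat.mul_add_div]

theorem sum_range_interleave (N : ℕ) :
    ∑ i ∈ range (2 * N), interleave p r₀ r₁ i = (∑ k ∈ range N, p k) * (r₀ + r₁) := by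
  simp only [sum_range_two_mul, interleave_two_mul, interleave_two_mul_add_one, ← mul_add,
    sum_mul]

variable {p r₀ r₁}

theorem interleave_odd_eq_succ (h : ∀ k, p k * r₁ = p (k + 1) * r₀) (k : ℕ) :
    interleave p r₀ r₁ (2 * k + 1) = interleave p r₀ r₁ (2 * k + 2) := by
  simpa [show 2 * k + 2 = 2 * (k + 1) by ring] using h k

theorem interleave_nonneg [PartialOrder R] [IsOrderedRing R] (hp : ∀ k, 0 ≤ p k) (h₀ : 0 ≤ r₀)
    (h₁ : 0 ≤ r₁) (i : ℕ) : 0 ≤ interleave p r₀ r₁ i :=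
  mul_nonneg (hp _) (by split_ifs <;> assumption)

end interleave

/-- The diagonal `λ*` of the optimal asymptotic cooling state of the full system,
`λ*_{2k} = p₀ e^{-2εk} e^{ε}/z` and `λ*_{2k+1} = p₀ e^{-2εk} e^{-ε}/z` with
`p₀ = (1 - e^{-2ε})/(1 - e^{-2εN})`, is a probability vector and is a fixed point
of the full TSAC iteration: the reset step
`ζ_{2k} = (λ_{2k} + λ_{2k+1}) e^ε/z`, `ζ_{2k+1} = (λ_{2k} + λ_{2k+1}) e^{-ε}/z`
followed by the two-sort permutation returns `λ*` unchanged. -/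
theorem tsac_full_oas_fixed_point (n : ℕ) (ε : ℝ) (hε : 0 < ε)
    (lamStar ζ : Fin (2 * 2 ^ n) → ℝ)
    (hstar : ∀ j : Fin (2 * 2 ^ n), lamStar j =
      (1 - Real.exp (-2 * ε)) / (1 - Real.exp (-2 * ε * 2 ^ n)) *
        Real.exp (-2 * ε * ((j : ℕ) / 2 : ℕ)) *
        (if (j : ℕ) % 2 = 0 then Real.exp ε else Real.exp (-ε)) /
        (Real.exp ε + Real.exp (-ε)))
    (hζ0 : ∀ k : Fin (2 ^ n), ζ ⟨2 * (k : ℕ), by have := k.isLt; omega⟩ =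
      (lamStar ⟨2 * (k : ℕ), by have := k.isLt; omega⟩ +
        lamStar ⟨2 * (k : ℕ) + 1, by have := k.isLt; omega⟩) *
        Real.exp ε / (Real.exp ε + Real.exp (-ε)))
    (hζ1 : ∀ k : Fin (2 ^ n), ζ ⟨2 * (k : ℕ) + 1, by have := k.isLt; omega⟩ =
      (lamStar ⟨2 * (k : ℕ), by have := k.isLt; omega⟩ +
        lamStar ⟨2 * (k : ℕ) + 1, by have := k.isLt; omega⟩) *
        Real.exp (-ε) / (Real.exp ε + Real.exp (-ε))) :
    (∀ j, 0 ≤ lamStar j) ∧ (∑ j, lamStar j = 1) ∧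
      (∀ j, ζ (sigmaTS (2 * 2 ^ n) j) = lamStar j) := by
  set z := exp ε + exp (-ε)
  set x := exp (-2 * ε)
  set p : ℕ → ℝ := fun k => (1 - x) / (1 - x ^ 2 ^ n) * x ^ k
  have hx_pow (k : ℕ) : exp (-2 * ε * k) = x ^ k := by rw [← exp_nat_mul, mul_comm]
  have hx_lt_one : x < 1 := exp_lt_one_iff.mpr (by linarith)
  have hxN_lt_one : x ^ 2 ^ n < 1 := pow_lt_one₀ (exp_pos _).le hx_lt_one (by positivity)
  have hreset : exp ε / z + exp (-ε) / z = 1 := by rw [← add_div, div_self (by positivity)]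
  have hlam (j : Fin (2 * 2 ^ n)) : lamStar j = interleave p (exp ε / z) (exp (-ε) / z) j := by
    have hxN := hx_pow (2 ^ n)
    push_cast at hxN
    rw [hstar, hxN, hx_pow, interleave]
    split_ifs <;> ring
  have hζ : ζ = lamStar := by
    refine Fin.eq_of_eq_on_pairs (fun k => ?_) (fun k => ?_) <;>
    · simp only [hζ0, hζ1, hlam, interleave_two_mul, interleave_two_mul_add_one, ← mul_add, hreset]
      ring
  refine ⟨fun j => ?_, ?_, fun j => ?_⟩
  · rw [hlam]
    refine interleave_nonneg (fun k => ?_) (by positivity) (by positivity) _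
    exact mul_nonneg (div_nonneg (by linarith) (by linarith)) (pow_nonneg (exp_pos _).le _)
  · simp only [hlam]
    rw [Fin.sum_univ_eq_sum_range (interleave p _ _), sum_range_interleave, hreset, mul_one]
    exact geom_sum_normalized hx_lt_one.ne hxN_lt_one.ne
  · have hshift (k : ℕ) : p k * (exp (-ε) / z) = p (k + 1) * (exp ε / z) := by
      have hx_mul : x * exp ε = exp (-ε) := by rw [← exp_add]; ring_nf
      simp only [p, pow_succ, ← hx_mul]
      ring
    rw [hζ, hlam, hlam]
    exact apply_sigmaTS_eq (interleave_odd_eq_succ hshift) j
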